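/- arXiv:1609.08431 — 2 statements merged into one kernel-verified Lean document; each statement's English description precedes it below -/
import Mathlib

section
/- For any run p of an FST 𝒜 on input sequence T (whether accepting or not), the output O(p) is a generalized subsequence of T: O(p) ⊑ T. -/
def GSubseq {α : Type*} (r : α → α → Prop) (S T : List α) : Prop :=
  ∃ T' : List α, T'.Sublist T ∧ List.Forall₂ (fun t s => r t s) T' S

/-- A finite state transducer: transitions are tuples
`(source, input label, output label, target)`, where `none` plays the role of `ε`. -/
structure FST (Q α : Type*) where
  init : Q
  final : Set Q
  delta : Set (Q × Option α × Option α × Q)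

/-- The structural condition on FSTs: for every transition, if the output label
is nonempty then the input label is some item `wi` and the output `wo` satisfies
`wo ∈ anc(wi)`, i.e. `r wi wo` (in particular, `ε`-input transitions have `ε` output). -/
def ValidFST {Q α : Type*} (r : α → α → Prop) (A : FST Q α) : Prop :=
  ∀ tr ∈ A.delta, ∀ wo : α, tr.2.2.1 = some wo → ∃ wi : α, tr.2.1 = some wi ∧ r wi wo

/-- `Run A q T S q'`: there is a run of `A` from state `q` to state `q'`
consuming input `T` and producing output `S`. -/
inductive Run {Q α : Type*} (A : FST Q α) : Q → List α → List α → Q → Prop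
  | nil (q : Q) : Run A q [] [] q
  | step {q q₂ q' : Q} {i o : Option α} {T S : List α}
      (h : (q, i, o, q₂) ∈ A.delta) (hr : Run A q₂ T S q') :
      Run A q (i.toList ++ T) (o.toList ++ S) q'

/-- The set of sequences generated by `A` on input `T`: nonempty outputs of accepting runs. -/
def Gen {Q α : Type*} (A : FST Q α) (T : List α) : Set (List α) :=
  {S | S ≠ [] ∧ ∃ q ∈ A.final, Run A A.init T S q}

namespace GSubseq

variable {α : Type*} {r : α → α → Prop} {S T : List α}

theorem nil_left (T : List α) : GSubseq r [] T :=
  ⟨[], List.nil_sublist T, .nil⟩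

theorem append_left (U : List α) (h : GSubseq r S T) : GSubseq r S (U ++ T) :=
  let ⟨T', hsub, hrel⟩ := h
  ⟨T', hsub.trans (List.sublist_append_right U T), hrel⟩

theorem cons_cons {a b : α} (hab : r a b) (h : GSubseq r S T) : GSubseq r (b :: S) (a :: T) :=
  let ⟨T', hsub, hrel⟩ := h
  ⟨a :: T', hsub.cons_cons a, .cons hab hrel⟩

end GSubseq

section

variable {Q α : Type*} {r : α → α → Prop} {A : FST Q α}

theorem ValidFST.gsubseq_transition (hA : ValidFST r A) {q q₂ : Q} {i o : Option α}
    (hmem : (q, i, o, q₂) ∈ A.delta) {S T : List α} (h : GSubseq r S T) :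
    GSubseq r (o.toList ++ S) (i.toList ++ T) := by
  cases o with
  | none => exact h.append_left i.toList
  | some wo =>
    obtain ⟨wi, rfl, hrel⟩ := hA _ hmem wo rfl
    exact h.cons_cons hrel

theorem Run.gsubseq (hA : ValidFST r A) {q q' : Q} {T S : List α} (h : Run A q T S q') :
    GSubseq r S T := by
  induction h with
  | nil => exact GSubseq.nil_left []
  | step hmem _ ih => exact hA.gsubseq_transition hmem ih

end

theorem fst_output_subseq {Q α : Type*} (r : α → α → Prop) (A : FST Q α)
    (hA : ValidFST r A) (T S : List α) (q : Q)
    (h : Run A A.init T S q) : GSubseq r S T :=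
  h.gsubseq hA
end

section
/- Prefix-support antimonotonicity: for any sequence S ∈ Σ* and any item w ∈ Σ, Presup_𝒜(Sw, 𝒟) ⊆ Presup_𝒜(S, 𝒟), where Sw is S with w appended. -/
/-- A snapshot for output `S`: a partial run of `A` from the initial state consuming
prefix `T'` of the input, ending in state `q`, with output exactly `S`, such that the
last transition produces a (nonempty) output item (or the run is empty and `S = ε`). -/
def Snapshot {Q α : Type*} (A : FST Q α) (S T' : List α) (q : Q) : Prop :=
  (S = [] ∧ T' = [] ∧ q = A.init) ∨
  ∃ (S₀ T₀ : List α) (w : α) (i : Option α) (q₁ : Q),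
    S = S₀ ++ [w] ∧ Run A A.init T₀ S₀ q₁ ∧
      (q₁, i, some w, q) ∈ A.delta ∧ T' = T₀ ++ i.toList

/-- The prefix support of `S`: input sequences in `𝒟` admitting a snapshot for `S`. -/
def Presup {Q α : Type*} (A : FST Q α) (D : Set (List α)) (S : List α) : Set (List α) :=
  {T ∈ D | ∃ (T' : List α) (q : Q), T' <+: T ∧ Snapshot A S T' q}

/-- The support of `S`: input sequences in `𝒟` that generate `S`. -/
def FSup {Q α : Type*} (A : FST Q α) (D : Set (List α)) (S : List α) : Set (List α) :=
  {T ∈ D | S ∈ Gen A T}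

/-! A snapshot for `S ++ [w]` contains a run from the initial state producing `S`. Cutting
that run right after its last output-producing transition (or at the start, if `S = []`)
gives a snapshot for `S` on a shorter prefix of the same input. -/

lemma Run.eq_nil_or_exists_last_output {Q α : Type*} {A : FST Q α} {q q' : Q}
    {T S : List α} (hr : Run A q T S q') :
    S = [] ∨ ∃ (S₀ T₀ : List α) (w : α) (i : Option α) (q₁ q₂ : Q),
      S = S₀ ++ [w] ∧ Run A q T₀ S₀ q₁ ∧ (q₁, i, some w, q₂) ∈ A.delta ∧
        T₀ ++ i.toList <+: T := by
  induction hr with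
  | nil => exact Or.inl rfl
  | @step q q₂ _ i o T S h _ ih =>
    rcases ih with rfl | ⟨S₀, T₀, w, i', q₁, q₃, rfl, hrun, hδ, hpre⟩
    · cases o with
      | none => exact Or.inl rfl
      | some w =>
        exact Or.inr ⟨[], [], w, i, q, q₂, rfl, .nil q, h, by simp⟩
    · refine Or.inr ⟨o.toList ++ S₀, i.toList ++ T₀, w, i', q₁, q₃, by simp, .step h hrun, hδ,
        ?_⟩
      simpa only [List.append_assoc] using (List.prefix_append_right_inj i.toList).2 hpre

lemma Snapshot.exists_of_run {Q α : Type*} {A : FST Q α} {q : Q} {T S : List α}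
    (hr : Run A A.init T S q) : ∃ T' q', T' <+: T ∧ Snapshot A S T' q' := by
  rcases hr.eq_nil_or_exists_last_output with rfl | ⟨S₀, T₀, w, i, q₁, q₂, rfl, hrun, hδ, hpre⟩
  · exact ⟨[], A.init, List.nil_prefix, Or.inl ⟨rfl, rfl, rfl⟩⟩
  · exact ⟨T₀ ++ i.toList, q₂, hpre, Or.inr ⟨S₀, T₀, w, i, q₁, rfl, hrun, hδ, rfl⟩⟩

lemma Snapshot.exists_run_of_append_singleton {Q α : Type*} {A : FST Q α} {q : Q}
    {S T' : List α} {w : α} (hs : Snapshot A (S ++ [w]) T' q) :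
    ∃ T₀ q₁, T₀ <+: T' ∧ Run A A.init T₀ S q₁ := by
  rcases hs with ⟨hS, -, -⟩ | ⟨S₀, T₀, w', i, q₁, hS, hrun, -, rfl⟩
  · exact absurd hS (List.append_ne_nil_of_right_ne_nil S (List.cons_ne_nil w []))
  · obtain rfl : S = S₀ := List.append_inj_left' hS rfl
    exact ⟨T₀, q₁, List.prefix_append T₀ i.toList, hrun⟩

theorem presup_antimono {Q α : Type*} (A : FST Q α) (D : Set (List α))
    (S : List α) (w : α) :
    Presup A D (S ++ [w]) ⊆ Presup A D S := by
  rintro T ⟨hD, T', q, hT', hs⟩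
  obtain ⟨T₀, q₁, hT₀, hrun⟩ := hs.exists_run_of_append_singleton
  obtain ⟨T'', q'', hT'', hs'⟩ := Snapshot.exists_of_run hrun
  exact ⟨hD, T'', q'', hT''.trans (hT₀.trans hT'), hs'⟩
end
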